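/- Let M be a smooth manifold, λ a real 1-form with dλ = 2π·ω for a given real 2-form ω, a = i·λ, and α : M → ℂ smooth and nowhere vanishing. Then d(Im ρ(α)) = 2π·ω, where ρ(α) = (dα + aα)/α. -/

import Mathlib

/-- Logarithmic covariant derivative `ρ(α) = (dα + a·α)/α`. -/
noncomputable def rho {M : Type*} [NormedAddCommGroup M] [NormedSpace ℝ M]
    (a : M → (M →L[ℝ] ℂ)) (α : M → ℂ) (x : M) : M →L[ℝ] ℂ :=
  (α x)⁻¹ • (fderiv ℝ α x + α x • a x)

/-- If `a = iλ` with `dλ = 2πω`, then `d(Im ρ(α)) = 2πω` (exterior derivative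
of a 1-form expressed as the antisymmetrized derivative). -/
theorem stmt5 {M : Type*} [NormedAddCommGroup M] [NormedSpace ℝ M]
    (l : M → (M →L[ℝ] ℝ)) (hl : ContDiff ℝ (⊤ : ℕ∞) l)
    (ω : M → (M →L[ℝ] M →L[ℝ] ℝ))
    (hdl : ∀ x u v, fderiv ℝ l x u v - fderiv ℝ l x v u = (2 * Real.pi) * ω x u v)
    (a : M → (M →L[ℝ] ℂ))
    (ha : ∀ x, a x = Complex.I • (Complex.ofRealCLM.comp (l x)))
    (α : M → ℂ) (hα : ContDiff ℝ (⊤ : ℕ∞) α) (hα0 : ∀ x, α x ≠ 0) :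
    ∀ x u v,
      fderiv ℝ (fun y => Complex.imCLM.comp (rho a α y)) x u v -
        fderiv ℝ (fun y => Complex.imCLM.comp (rho a α y)) x v u =
      (2 * Real.pi) * ω x u v := by
  intro x u v
  set c : M → ℂ := fun y => (α y)⁻¹ with hc_def
  set F : M → (M →L[ℝ] ℂ) := fun y => fderiv ℝ α y with hF_def
  set f : M → (M →L[ℝ] ℂ) := fun y => c y • F y with hf_def
  set g : (M →L[ℝ] ℂ) →L[ℝ] (M →L[ℝ] ℝ) :=
    ContinuousLinearMap.compL ℝ M ℂ ℝ Complex.imCLM with hg_def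
  have hαd : Differentiable ℝ α := hα.differentiable (by simp)
  have hFd : Differentiable ℝ F := (hα.fderiv_right (m := 1) (WithTop.coe_le_coe.mpr le_top)).differentiable one_ne_zero
  have hcd : Differentiable ℝ c := fun y => (hαd y).inv (hα0 y)
  have hfd : Differentiable ℝ f := hcd.smul hFd
  -- rewrite the function
  have key : (fun y => Complex.imCLM.comp (rho a α y)) = fun y => g (f y) + l y := by
    funext y
    have h1 : rho a α y = f y + a y := by
      simp only [rho, hf_def, hc_def, hF_def, smul_add, smul_smul,
        inv_mul_cancel₀ (hα0 y), one_smul]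
    rw [h1]
    ext m
    simp [ha y, hg_def, Complex.add_im]
  rw [key]
  have hfd' : DifferentiableAt ℝ (fun y => g (f y)) x :=
    (g.differentiable.comp hfd) x
  have hld : DifferentiableAt ℝ l x := (hl.differentiable (by simp)) x
  rw [show (fun y => g (f y) + l y) = (fun y => g (f y)) + l from rfl, fderiv_add hfd' hld]
  have hgf : fderiv ℝ (fun y => g (f y)) x = g.comp (fderiv ℝ f x) :=
    (g.hasFDerivAt.comp x (hfd x).hasFDerivAt).fderiv
  -- second derivative of α symmetric
  have hsymm : ∀ u v, fderiv ℝ F x u v = fderiv ℝ F x v u :=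
    second_derivative_symmetric (fun y => (hαd y).hasFDerivAt) (hFd x).hasFDerivAt
  -- derivative of c
  have hdc : fderiv ℝ c x =
      (-(ContinuousLinearMap.mulLeftRight ℝ ℂ (α x)⁻¹ (α x)⁻¹)).comp (F x) :=
    ((hasFDerivAt_inv' (hα0 x)).comp x (hαd x).hasFDerivAt).fderiv
  have hf' : fderiv ℝ f x = c x • fderiv ℝ F x + (fderiv ℝ c x).smulRight (F x) :=
    fderiv_smul (hcd x) (hFd x)
  have hfsymm : fderiv ℝ f x u v - fderiv ℝ f x v u = 0 := by
    simp only [hf', hdc, ContinuousLinearMap.add_apply, ContinuousLinearMap.smul_apply,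
      ContinuousLinearMap.smulRight_apply, ContinuousLinearMap.comp_apply,
      ContinuousLinearMap.neg_apply, ContinuousLinearMap.mulLeftRight_apply,
      smul_eq_mul, hsymm u v]
    ring
  simp only [ContinuousLinearMap.add_apply, ContinuousLinearMap.comp_apply, hgf]
  have him : g (fderiv ℝ f x u) v - g (fderiv ℝ f x v) u =
      Complex.imCLM (fderiv ℝ f x u v - fderiv ℝ f x v u) := by
    simp [hg_def]
  rw [show ∀ A B C D : ℝ, A + B - (C + D) = (A - C) + (B - D) by intros; ring]
  rw [him, hfsymm, map_zero, zero_add]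
  exact hdl x u v
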